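/- arXiv:2003.05418 — 2 statements merged into one kernel-verified Lean document; each statement's English description precedes it below -/
import Mathlib

section
/- For every nonnegative integer m and |q|<1, (-1)^m q^{m(m+1)/2} Σ_{n=0}^{m} (q^{-m};q)_n (q^{m+1};q)_{n+2} = Σ_{n=0}^{m} (1 - q^{2n+2}) q^{2n²+3n+1} Σ_{j=-n-1}^{n} (-1)^{j+1} q^{-j(3j+1)/2}. -/
/-!
Put `w r = (-1)^r q^{r(r+1)/2}` (`signedTri q r`) and
`F(M, L) = ∑_{r ≤ M} w r (q^{r+1};q)_{2(M-r)+L}` (`pochSum (signedTri q) q M L`).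
Reversing the product `(q^{-m};q)_n` shows that the left-hand side is `F(m, 2)`.
Two elementary moves relate the sums `F(M, L)` of neighbouring lengths: removing the last factor of
each Pochhammer symbol, and splitting off its first factor `1 - q^{r+1}` so that the `r`-th term
combines with the `(r+1)`-st. Together they give a coupled recurrence for `F(M, 0)` and `F(M, 1)`.
The partial sums of the right-hand side satisfy the same recurrence, because going from
`S_n = ∑_{j=-n-1}^{n} (-1)^{j+1} q^{-j(3j+1)/2}` to `S_{n+1}` adds two pentagonal terms.
With the weight `q^{(n+2)(2n+3)}`, these terms come to exactly `(1 - q^{2n+3}) w (n+1)`.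
-/

/-- Finite q-Pochhammer symbol `(a;q)_n`. -/
noncomputable def qp (a q : ℂ) (n : ℕ) : ℂ := ∏ k ∈ Finset.range n, (1 - a * q ^ k)

open Finset

section QPochhammer

variable (a q : ℂ)

@[simp] lemma qp_zero : qp a q 0 = 1 := prod_range_zero _

lemma qp_succ (n : ℕ) : qp a q (n + 1) = qp a q n * (1 - a * q ^ n) := prod_range_succ _ _

lemma qp_succ' (n : ℕ) : qp a q (n + 1) = (1 - a) * qp (a * q) q n := by
  simp only [qp, prod_range_succ', pow_zero, mul_one, pow_succ, mul_assoc, mul_comm]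

lemma qp_add (s t : ℕ) : qp a q (s + t) = qp a q s * qp (a * q ^ s) q t := by
  simp only [qp, prod_range_add, pow_add, mul_assoc]

end QPochhammer

noncomputable def pochSum (c : ℕ → ℂ) (q : ℂ) (M L : ℕ) : ℂ :=
  ∑ r ∈ range (M + 1), c r * qp (q ^ (r + 1)) q (2 * (M - r) + L)

section PochSum

variable {c c' : ℕ → ℂ} {q : ℂ}

lemma pochSum_succ (M L : ℕ) :
    pochSum c q (M + 1) L = pochSum c q M (L + 2) + c (M + 1) * qp (q ^ (M + 2)) q L := by
  unfold pochSum
  rw [sum_range_succ, Nat.sub_self, mul_zero, zero_add]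
  congr 1
  refine sum_congr rfl fun r hr => ?_
  rw [show 2 * (M + 1 - r) + L = 2 * (M - r) + (L + 2) by grind]

lemma pochSum_length_succ (h : ∀ r, c r = q ^ r * c' r) (M L : ℕ) :
    pochSum c q M (L + 1) = pochSum c q M L - q ^ (2 * M + L + 1) * pochSum c' q M L := by
  rw [pochSum, pochSum, pochSum, mul_sum, ← sum_sub_distrib]
  refine sum_congr rfl fun r hr => ?_
  have hexp : r + 1 + (2 * (M - r) + L) + r = 2 * M + L + 1 := by grind
  rw [← add_assoc, qp_succ, h, ← hexp, pow_add, pow_add]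
  ring

lemma pochSum_shift (h0 : c' 0 = c 0) (h : ∀ r, c' (r + 1) = c (r + 1) - c r * (1 - q ^ (r + 1)))
    (M L : ℕ) :
    pochSum c' q M (L + 1) =
      pochSum c q M (L + 1) - pochSum c q M L + c M * qp (q ^ (M + 1)) q L := by
  have hc' : pochSum c' q M (L + 1) = ∑ r ∈ range M, c' (r + 1) *
      qp (q ^ (r + 1 + 1)) q (2 * (M - (r + 1)) + (L + 1)) +
        c 0 * qp (q ^ 1) q (2 * M + (L + 1)) := by
    rw [pochSum, sum_range_succ', h0, Nat.sub_zero]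
  have hc : pochSum c q M (L + 1) = ∑ r ∈ range M, c (r + 1) *
      qp (q ^ (r + 1 + 1)) q (2 * (M - (r + 1)) + (L + 1)) +
        c 0 * qp (q ^ 1) q (2 * M + (L + 1)) := by
    rw [pochSum, sum_range_succ', Nat.sub_zero]
  have hcL : pochSum c q M L =
      ∑ r ∈ range M, c r * qp (q ^ (r + 1)) q (2 * (M - r) + L) +
        c M * qp (q ^ (M + 1)) q L := by
    rw [pochSum, sum_range_succ, Nat.sub_self, mul_zero, zero_add]
  have hterm : ∀ r ∈ range M,
      c' (r + 1) * qp (q ^ (r + 1 + 1)) q (2 * (M - (r + 1)) + (L + 1)) =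
        c (r + 1) * qp (q ^ (r + 1 + 1)) q (2 * (M - (r + 1)) + (L + 1)) -
          c r * qp (q ^ (r + 1)) q (2 * (M - r) + L) := by
    intro r hr
    rw [show 2 * (M - r) + L = 2 * (M - (r + 1)) + (L + 1) + 1 by grind, qp_succ', h, ← pow_succ]
    ring
  rw [hc', hc, hcL, sum_congr rfl hterm, sum_sub_distrib]
  ring

end PochSum

lemma pow_choose_two_succ {M : Type*} [Monoid M] (x : M) (n : ℕ) :
    x ^ (n + 1).choose 2 = x ^ n * x ^ n.choose 2 := by
  rw [Nat.choose_succ_succ', Nat.choose_one_right, pow_add]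

noncomputable def signedTri (q : ℂ) (r : ℕ) : ℂ := (-1) ^ r * q ^ (r + 1).choose 2

noncomputable def signedTriPred (q : ℂ) (r : ℕ) : ℂ := (-1) ^ r * q ^ r.choose 2

section SignedTri

variable (q : ℂ)

lemma signedTri_eq_pow_mul (r : ℕ) : signedTri q r = q ^ r * signedTriPred q r := by
  rw [signedTri, signedTriPred, pow_choose_two_succ]
  ring

lemma signedTriPred_succ (r : ℕ) :
    signedTriPred q (r + 1) = signedTri q (r + 1) - signedTri q r * (1 - q ^ (r + 1)) := by
  rw [signedTri, signedTri, signedTriPred, pow_choose_two_succ q (r + 1)]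
  ring

lemma pochSum_signedTri_odd_succ (M : ℕ) :
    pochSum (signedTri q) q (M + 1) 1 =
      (1 - q ^ (2 * M + 3)) * pochSum (signedTri q) q (M + 1) 0 +
        q ^ (2 * M + 3) * pochSum (signedTri q) q M 1 := by
  have hlen := pochSum_length_succ (signedTri_eq_pow_mul q) (M + 1) 0
  have hpred := pochSum_succ (c := signedTriPred q) (q := q) M 0
  have hshift := pochSum_shift (by simp [signedTri, signedTriPred]) (signedTriPred_succ q) M 1
  have hsucc := pochSum_succ (c := signedTri q) (q := q) M 0
  rw [signedTriPred_succ, qp_zero, mul_one] at hpred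
  rw [qp_zero, mul_one] at hsucc
  rw [show 2 * (M + 1) + 0 + 1 = 2 * M + 3 by ring] at hlen
  simp only [qp, prod_range_one, pow_zero, mul_one] at hshift
  simp only [Nat.reduceAdd, zero_add] at hlen hpred hshift hsucc
  linear_combination hlen - q ^ (2 * M + 3) * (hpred + hshift - hsucc)

lemma pochSum_signedTri_even_succ (M : ℕ) :
    pochSum (signedTri q) q (M + 1) 0 = pochSum (signedTri q) q M 1 -
      q ^ (2 * M + 2) * (pochSum (signedTri q) q M 1 - pochSum (signedTri q) q M 0 +
        signedTri q M) + signedTri q (M + 1) := by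
  have hsucc := pochSum_succ (c := signedTri q) (q := q) M 0
  have hlen := pochSum_length_succ (signedTri_eq_pow_mul q) M 1
  have hshift := pochSum_shift (by simp [signedTri, signedTriPred]) (signedTriPred_succ q) M 0
  rw [qp_zero, mul_one] at hsucc hshift
  simp only [Nat.reduceAdd, zero_add] at hlen hshift hsucc
  linear_combination hsucc + hlen - q ^ (2 * M + 2) * hshift

end SignedTri

noncomputable def pentagonalSum (q : ℂ) (n : ℕ) : ℂ :=
  ∑ j ∈ Icc (-(n : ℤ) - 1) n, (-1 : ℂ) ^ (j + 1) * q ^ (-(j * (3 * j + 1) / 2))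

lemma two_mul_pentagonal_div_two (j : ℤ) : 2 * (j * (3 * j + 1) / 2) = j * (3 * j + 1) := by
  refine Int.two_mul_ediv_two_of_even ?_
  rw [show j * (3 * j + 1) = j * (j + 1) + 2 * (j * j) by ring]
  exact (Int.even_mul_succ_self j).add (even_two_mul _)

lemma choose_two_mul_two (n : ℕ) : (n.choose 2 : ℤ) * 2 = n * (n - 1) := by
  cases n with
  | zero => simp
  | succ n =>
    have h := Nat.add_one_mul_choose_eq n 1
    rw [Nat.choose_one_right] at h
    have h' : ((n + 1).choose 2 : ℤ) * 2 = (n + 1) * n := by exact_mod_cast h.symm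
    push_cast
    rw [h']
    ring

lemma pow_mul_zpow_eq_pow {G₀ : Type*} [GroupWithZero G₀] {q : G₀} (hq : q ≠ 0) {a b : ℕ}
    {e : ℤ} (h : (a : ℤ) + e = b) : q ^ a * q ^ e = q ^ b := by
  rw [← zpow_natCast, ← zpow_natCast, ← zpow_add₀ hq, h]

lemma pentagonalSum_zero {q : ℂ} (hq : q ≠ 0) : q * pentagonalSum q 0 = 1 - q := by
  have hIcc : Icc (-((0 : ℕ) : ℤ) - 1) ((0 : ℕ) : ℤ) = {-1, 0} := by decide
  rw [pentagonalSum, hIcc, sum_pair (by decide)]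
  norm_num
  field_simp
  ring

lemma pentagonalSum_succ {q : ℂ} (hq : q ≠ 0) (n : ℕ) :
    q ^ (2 * n + 4).choose 2 * (pentagonalSum q (n + 1) - pentagonalSum q n) =
      (1 - q ^ (2 * n + 3)) * signedTri q (n + 1) := by
  have hIcc : Icc (-((n + 1 : ℕ) : ℤ) - 1) ((n + 1 : ℕ) : ℤ) =
      insert (-(n : ℤ) - 2) (insert ((n : ℤ) + 1) (Icc (-(n : ℤ) - 1) n)) := by
    ext j
    simp only [mem_Icc, mem_insert]
    omega
  have hfar := two_mul_pentagonal_div_two (-(n : ℤ) - 2)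
  have hnear := two_mul_pentagonal_div_two ((n : ℤ) + 1)
  have hbig := choose_two_mul_two (2 * n + 4)
  have hsmall := choose_two_mul_two (n + 2)
  push_cast at hbig hsmall
  have hpow_far :
      q ^ (2 * n + 4).choose 2 * q ^ (-((-(n : ℤ) - 2) * (3 * (-(n : ℤ) - 2) + 1) / 2)) =
        q ^ (n + 2).choose 2 := by
    apply pow_mul_zpow_eq_pow hq
    linarith
  have hpow_near :
      q ^ (2 * n + 4).choose 2 * q ^ (-(((n : ℤ) + 1) * (3 * ((n : ℤ) + 1) + 1) / 2)) =
        q ^ (2 * n + 3) * q ^ (n + 2).choose 2 := by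
    rw [← pow_add]
    apply pow_mul_zpow_eq_pow hq
    push_cast
    linarith
  have hsign_far : (-1 : ℂ) ^ (-(n : ℤ) - 2 + 1) = (-1) ^ (n + 1) := by
    rw [show -(n : ℤ) - 2 + 1 = -((n + 1 : ℕ) : ℤ) by push_cast; ring, zpow_neg, zpow_natCast,
      ← inv_pow, inv_neg_one]
  have hsign_near : (-1 : ℂ) ^ ((n : ℤ) + 1 + 1) = (-1) ^ n := by
    rw [show (n : ℤ) + 1 + 1 = ((n + 2 : ℕ) : ℤ) by push_cast; ring, zpow_natCast, pow_add]
    norm_num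
  rw [pentagonalSum, pentagonalSum, hIcc, sum_insert (by simp only [mem_insert, mem_Icc]; omega),
    sum_insert (by simp only [mem_Icc]; omega), ← add_assoc, add_sub_cancel_right, hsign_far,
    hsign_near, signedTri]
  linear_combination (-1 : ℂ) ^ (n + 1) * hpow_far + (-1 : ℂ) ^ n * hpow_near

noncomputable def pentagonalSeries (q : ℂ) (M : ℕ) : ℂ :=
  ∑ n ∈ range M, (1 - q ^ (2 * n + 2)) * q ^ (2 * n + 2).choose 2 * pentagonalSum q n

theorem pochSum_signedTri_eq {q : ℂ} (hq : q ≠ 0) (M : ℕ) :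
    pochSum (signedTri q) q M 0 = pentagonalSeries q M + signedTri q M ∧
      pochSum (signedTri q) q M 1 =
        pentagonalSeries q M + q ^ (2 * M + 2).choose 2 * pentagonalSum q M := by
  induction M with
  | zero =>
    refine ⟨by simp [pochSum, pentagonalSeries, signedTri], ?_⟩
    simpa [pochSum, pentagonalSeries, signedTri, qp] using (pentagonalSum_zero hq).symm
  | succ M ih =>
    obtain ⟨ihE, ihO⟩ := ih
    have hseries : pentagonalSeries q (M + 1) = pentagonalSeries q M +
        (1 - q ^ (2 * M + 2)) * q ^ (2 * M + 2).choose 2 * pentagonalSum q M :=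
      sum_range_succ _ _
    have hE : pochSum (signedTri q) q (M + 1) 0 =
        pentagonalSeries q (M + 1) + signedTri q (M + 1) := by
      rw [pochSum_signedTri_even_succ, ihE, ihO, hseries]
      ring
    refine ⟨hE, ?_⟩
    have hpow : q ^ (2 * M + 4).choose 2 =
        q ^ (2 * M + 3) * q ^ (2 * M + 2) * q ^ (2 * M + 2).choose 2 := by
      rw [pow_choose_two_succ q (2 * M + 3), pow_choose_two_succ q (2 * M + 2), mul_assoc]
    have hstep := pentagonalSum_succ hq M
    rw [hpow] at hstep
    rw [pochSum_signedTri_odd_succ, hE, ihO, hseries, show 2 * (M + 1) + 2 = 2 * M + 4 by ring,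
      hpow]
    linear_combination -hstep

-- `1 - q^{-(k+1)} = -q^{-(k+1)} (1 - q^{k+1})`, i.e. the product `(q^{-m};q)_n` read backwards.
lemma signedTri_succ_mul_one_sub_zpow {q : ℂ} (hq : q ≠ 0) (k : ℕ) :
    signedTri q (k + 1) * (1 - q ^ (-((k + 1 : ℕ) : ℤ))) =
      signedTri q k * (1 - q ^ (k + 1)) := by
  rw [signedTri, signedTri, pow_choose_two_succ q (k + 1), zpow_neg, zpow_natCast]
  field_simp
  ring

lemma signedTri_add_mul_qp_zpow {q : ℂ} (hq : q ≠ 0) (r n : ℕ) :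
    signedTri q (r + n) * qp (q ^ (-((r + n : ℕ) : ℤ))) q n =
      signedTri q r * qp (q ^ (r + 1)) q n := by
  induction n with
  | zero => simp
  | succ n ih =>
    have hshift : q ^ (-((r + (n + 1) : ℕ) : ℤ)) * q = q ^ (-((r + n : ℕ) : ℤ)) := by
      rw [← zpow_add_one₀ hq]
      congr 1
      push_cast
      ring
    rw [qp_succ', hshift, ← add_assoc, ← mul_assoc, signedTri_succ_mul_one_sub_zpow hq,
      mul_right_comm, ih, qp_succ, ← pow_add]
    ring_nf

lemma signedTri_mul_sum_qp_eq_pochSum {q : ℂ} (hq : q ≠ 0) (m : ℕ) :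
    signedTri q m *
        ∑ n ∈ range (m + 1), qp (q ^ (-(m : ℤ))) q n * qp (q ^ (m + 1)) q (n + 2) =
      pochSum (signedTri q) q m 2 := by
  rw [mul_sum, pochSum]
  conv_rhs => rw [← sum_range_reflect]
  refine sum_congr rfl fun n hn => ?_
  obtain ⟨r, rfl⟩ := Nat.exists_eq_add_of_le' (Nat.lt_succ_iff.mp (mem_range.mp hn))
  rw [show r + n + 1 - 1 - n = r by omega, show r + n - r = n by omega, ← mul_assoc,
    signedTri_add_mul_qp_zpow hq, mul_assoc, show r + n + 1 = r + 1 + n by ring,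
    pow_add q (r + 1) n, ← qp_add, show 2 * n + 2 = n + (n + 2) by ring]

theorem stmt4_general (m : ℕ) (q : ℂ) (hq0 : q ≠ 0) :
    (-1 : ℂ) ^ m * q ^ (m * (m + 1) / 2) *
        ∑ n ∈ Finset.range (m + 1), qp (q ^ (-(m : ℤ))) q n * qp (q ^ (m + 1)) q (n + 2) =
      ∑ n ∈ Finset.range (m + 1), (1 - q ^ (2 * n + 2)) * q ^ (2 * n ^ 2 + 3 * n + 1) *
        ∑ j ∈ Finset.Icc (-(n : ℤ) - 1) (n : ℤ),
          (-1 : ℂ) ^ (j + 1) * q ^ (-(j * (3 * j + 1) / 2)) := by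
  have hcoeff : (-1 : ℂ) ^ m * q ^ (m * (m + 1) / 2) = signedTri q m := by
    rw [signedTri, Nat.choose_two_right, Nat.add_sub_cancel, mul_comm m]
  have hexp (n : ℕ) : 2 * n ^ 2 + 3 * n + 1 = (2 * n + 2).choose 2 := by
    have h := choose_two_mul_two (2 * n + 2)
    push_cast at h
    have h' : (((2 * n + 2).choose 2 : ℕ) : ℤ) = 2 * n ^ 2 + 3 * n + 1 := by linarith
    exact_mod_cast h'.symm
  have hseries := (pochSum_signedTri_eq hq0 (m + 1)).1
  rw [pochSum_succ, qp_zero, mul_one, add_left_inj] at hseries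
  rw [hcoeff, signedTri_mul_sum_qp_eq_pochSum hq0, hseries, pentagonalSeries]
  simp only [hexp, pentagonalSum]

/-- `(-1)^m q^{m(m+1)/2} Σ_{n=0}^m (q^{-m};q)_n (q^{m+1};q)_{n+2}
      = Σ_{n=0}^m (1-q^{2n+2}) q^{2n²+3n+1} Σ_{j=-n-1}^n (-1)^{j+1} q^{-j(3j+1)/2}`. -/
theorem stmt4 (m : ℕ) (q : ℂ) (hq : ‖q‖ < 1) (hq0 : q ≠ 0) :
    (-1 : ℂ) ^ m * q ^ (m * (m + 1) / 2) *
        ∑ n ∈ Finset.range (m + 1), qp (q ^ (-(m : ℤ))) q n * qp (q ^ (m + 1)) q (n + 2) =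
      ∑ n ∈ Finset.range (m + 1), (1 - q ^ (2 * n + 2)) * q ^ (2 * n ^ 2 + 3 * n + 1) *
        ∑ j ∈ Finset.Icc (-(n : ℤ) - 1) (n : ℤ),
          (-1 : ℂ) ^ (j + 1) * q ^ (-(j * (3 * j + 1) / 2)) :=
  stmt4_general m q hq0
end

section
/- For every nonnegative integer m, (-1)^m q^{m(m+1)/2} Σ_{n=0}^{m} (q^{-m};q)_n (q^{m+1};q)_{n+1} / (q;q²)_{n+1} = Σ_{n=0}^{m} (-1)^n q^{n(n+1)} Σ_{j=-n}^{n} q^{-j(j+1)/2}, as an identity of rational functions in q. -/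
/-!
Both sides, as functions `f m`, satisfy the inhomogeneous three-term recurrence
`f (k+2) = (1 - q^(2k+4)) f (k+1) + q^(2k+4) f k + (-1)^k q^((k+2)(k+3)/2) (1 + q^(k+2))`
and agree at `m = 0, 1`.

On the right this is immediate, since the inner sum gains exactly the two terms `j = ±(n+1)` when
`n` grows. On the left, the summand `t_a(n) = (a⁻¹;q)_n (aq;q)_{n+1} / (q;q²)_{n+1}` (with
`a = q^m`) satisfies the contiguous relation
`(1 - a²q²) t_a(n) = a q² t_{a/q}(n+1) - a q t_{aq}(n+1)`,
which telescopes when summed over `n` because `(q^{-m};q)_n = 0` for `n > m`.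
-/

open Finset

namespace QSeries

lemma qp_succ (a q : ℂ) (n : ℕ) : qp a q (n + 1) = qp a q n * (1 - a * q ^ n) :=
  prod_range_succ _ _

lemma qp_succ' (a q : ℂ) (n : ℕ) : qp a q (n + 1) = (1 - a) * qp (a * q) q n := by
  rw [qp, prod_range_succ', mul_comm, pow_zero, mul_one]
  simp only [qp, pow_succ', mul_assoc]

lemma qp_ne_zero {a q : ℂ} {n : ℕ} (h : ∀ k < n, a * q ^ k ≠ 1) : qp a q n ≠ 0 :=
  prod_ne_zero_iff.mpr fun k hk => sub_ne_zero.mpr (h k (mem_range.mp hk)).symm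

lemma qp_eq_zero {a q : ℂ} {k n : ℕ} (hk : k < n) (h : a * q ^ k = 1) : qp a q n = 0 :=
  prod_eq_zero (mem_range.mpr hk) (by rw [h, sub_self])

lemma pow_ne_one_of_not_isOfFinOrder {M : Type*} [Monoid M] {x : M} (hx : ¬IsOfFinOrder x)
    {j : ℕ} (hj : j ≠ 0) : x ^ j ≠ 1 :=
  fun h => hx (isOfFinOrder_iff_pow_eq_one.mpr ⟨j, Nat.pos_of_ne_zero hj, h⟩)

lemma one_sub_pow_ne_zero {R : Type*} [Ring R] {x : R} (hx : ¬IsOfFinOrder x) {j : ℕ}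
    (hj : j ≠ 0) : 1 - x ^ j ≠ 0 :=
  sub_ne_zero.mpr (pow_ne_one_of_not_isOfFinOrder hx hj).symm

lemma eq_of_second_order_recurrence {α : Type*} {f g : ℕ → α} (F : ℕ → α → α → α)
    (hf : ∀ k, f (k + 2) = F k (f k) (f (k + 1))) (hg : ∀ k, g (k + 2) = F k (g k) (g (k + 1)))
    (h0 : f 0 = g 0) (h1 : f 1 = g 1) : f = g := by
  funext n
  induction n using Nat.twoStepInduction with
  | zero => exact h0
  | one => exact h1
  | more k ih0 ih1 => rw [hf, hg, ih0, ih1]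

noncomputable def qTerm (q a : ℂ) (n : ℕ) : ℂ :=
  qp a⁻¹ q n * qp (a * q) q (n + 1) / qp q (q ^ 2) (n + 1)

lemma qTerm_contiguous {q a : ℂ} {n : ℕ} (hq : q ≠ 0) (ha : a ≠ 0) (ha1 : a ≠ 1)
    (haq : a * q ≠ 1) (hD : qp q (q ^ 2) (n + 2) ≠ 0) :
    (1 - a ^ 2 * q ^ 2) * qTerm q a n =
      a * q ^ 2 * qTerm q (a / q) (n + 1) - a * q * qTerm q (a * q) (n + 1) := by
  have hD' : qp q (q ^ 2) (n + 2) = qp q (q ^ 2) (n + 1) * (1 - q ^ (2 * n + 3)) := by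
    rw [qp_succ]; ring_nf
  obtain ⟨hD1, hd⟩ := mul_ne_zero_iff.mp (hD' ▸ hD)
  have hainv : (1 : ℂ) - a⁻¹ ≠ 0 := sub_ne_zero.mpr (by simpa [eq_comm] using ha1)
  have haq' : (1 : ℂ) - a * q ≠ 0 := sub_ne_zero.mpr (Ne.symm haq)
  have h1 : qp (a / q)⁻¹ q (n + 1) =
      qp a⁻¹ q n * (1 - a⁻¹ * q ^ n) * (1 - a⁻¹ * q ^ (n + 1)) / (1 - a⁻¹) := by
    rw [eq_div_iff hainv, ← qp_succ, ← qp_succ, qp_succ' a⁻¹, inv_div, div_eq_inv_mul, mul_comm]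
  have h2 : qp (a / q * q) q (n + 2) = (1 - a) * qp (a * q) q (n + 1) := by
    rw [div_mul_cancel₀ a hq, qp_succ']
  have h3 : qp (a * q)⁻¹ q (n + 1) = (1 - (a * q)⁻¹) * qp a⁻¹ q n := by
    rw [qp_succ', mul_inv, inv_mul_cancel_right₀ hq]
  have h4 : qp (a * q * q) q (n + 2) =
      qp (a * q) q (n + 1) * (1 - a * q * q ^ (n + 1)) * (1 - a * q * q ^ (n + 2)) /
        (1 - a * q) := by
    rw [eq_div_iff haq', ← qp_succ, ← qp_succ, qp_succ' (a * q), mul_comm]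
  simp only [qTerm]
  rw [hD', h1, h2, h3, h4]
  field_simp
  ring

variable {q : ℂ}

lemma qp_odd_ne_zero (hq : ¬IsOfFinOrder q) (n : ℕ) : qp q (q ^ 2) n ≠ 0 :=
  qp_ne_zero fun k _ => by
    rw [← pow_mul, ← pow_succ']
    exact pow_ne_one_of_not_isOfFinOrder hq (Nat.succ_ne_zero _)

lemma qTerm_pow_contiguous (hq0 : q ≠ 0) (hq : ¬IsOfFinOrder q) (k n : ℕ) :
    (1 - q ^ (2 * k + 4)) * qTerm q (q ^ (k + 1)) n =
      q ^ (k + 3) * qTerm q (q ^ k) (n + 1) - q ^ (k + 2) * qTerm q (q ^ (k + 2)) (n + 1) := by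
  have h := qTerm_contiguous (a := q ^ (k + 1)) hq0 (pow_ne_zero _ hq0)
    (pow_ne_one_of_not_isOfFinOrder hq k.succ_ne_zero)
    (by rw [← pow_succ]; exact pow_ne_one_of_not_isOfFinOrder hq (k + 1).succ_ne_zero)
    (qp_odd_ne_zero hq (n + 2))
  have hdiv : q ^ (k + 1) / q = q ^ k := by rw [pow_succ, mul_div_cancel_right₀ _ hq0]
  rw [hdiv, ← pow_succ q (k + 1)] at h
  linear_combination h

lemma qTerm_zero (q a : ℂ) : qTerm q a 0 = (1 - a * q) / (1 - q) := by
  simp [qTerm, qp]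

lemma qTerm_pow_eq_zero (hq0 : q ≠ 0) {m n : ℕ} (h : m < n) : qTerm q (q ^ m) n = 0 := by
  rw [qTerm, qp_eq_zero h (inv_mul_cancel₀ (pow_ne_zero m hq0)), zero_mul, zero_div]

noncomputable def qTermSum (q : ℂ) (m : ℕ) : ℂ :=
  ∑ n ∈ range (m + 1), qTerm q (q ^ m) n

lemma qTermSum_eq_sum_range (hq0 : q ≠ 0) {m N : ℕ} (h : m < N) :
    qTermSum q m = ∑ n ∈ range N, qTerm q (q ^ m) n :=
  sum_subset (range_subset_range.mpr h) fun n _ hn =>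
    qTerm_pow_eq_zero hq0 (by simpa using hn)

lemma qTermSum_recurrence (hq0 : q ≠ 0) (hq : ¬IsOfFinOrder q) (k : ℕ) :
    q ^ (k + 2) * qTermSum q (k + 2) =
      -(1 - q ^ (2 * k + 4)) * qTermSum q (k + 1) + q ^ (k + 3) * qTermSum q k +
        q ^ (k + 2) * (1 + q ^ (k + 2)) := by
  have hS1 : (1 - q ^ (2 * k + 4)) * qTermSum q (k + 1) = ∑ n ∈ range (k + 2),
      (q ^ (k + 3) * qTerm q (q ^ k) (n + 1) - q ^ (k + 2) * qTerm q (q ^ (k + 2)) (n + 1)) := by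
    rw [qTermSum, mul_sum]
    exact sum_congr rfl fun n _ => qTerm_pow_contiguous hq0 hq k n
  have hS0 : qTermSum q k = ∑ n ∈ range (k + 2), qTerm q (q ^ k) (n + 1) + qTerm q (q ^ k) 0 := by
    rw [qTermSum_eq_sum_range hq0 (by omega : k < k + 3), sum_range_succ']
  have hS2 : qTermSum q (k + 2) =
      ∑ n ∈ range (k + 2), qTerm q (q ^ (k + 2)) (n + 1) + qTerm q (q ^ (k + 2)) 0 := by
    rw [qTermSum, sum_range_succ']
  have h1q : (1 : ℂ) - q ≠ 0 := pow_one q ▸ one_sub_pow_ne_zero hq one_ne_zero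
  rw [neg_mul, hS1, hS0, hS2, sum_sub_distrib, ← mul_sum, ← mul_sum, qTerm_zero, qTerm_zero]
  field_simp
  ring

lemma triangle_succ (n : ℕ) : (n + 1) * (n + 2) / 2 = n * (n + 1) / 2 + (n + 1) := by
  rw [show (n + 1) * (n + 2) = n * (n + 1) + 2 * (n + 1) by ring,
    Nat.add_mul_div_left _ _ two_pos]

lemma two_mul_triangle (n : ℕ) : 2 * (n * (n + 1) / 2) = n * (n + 1) :=
  Nat.two_mul_div_two_of_even (Nat.even_mul_succ_self n)

lemma zpow_neg_triangle (q : ℂ) {j : ℤ} {n : ℕ} (h : j * (j + 1) = n * (n + 1)) :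
    q ^ (-(j * (j + 1) / 2)) = (q ^ (n * (n + 1) / 2))⁻¹ := by
  rw [h, zpow_neg, ← zpow_natCast, Int.natCast_ediv]
  push_cast
  rfl

noncomputable def thetaSum (q : ℂ) (n : ℕ) : ℂ :=
  ∑ j ∈ Icc (-(n : ℤ)) n, q ^ (-(j * (j + 1) / 2))

lemma thetaSum_zero (q : ℂ) : thetaSum q 0 = 1 := by
  simp [thetaSum]

lemma thetaSum_succ (q : ℂ) (n : ℕ) :
    thetaSum q (n + 1) =
      thetaSum q n + (q ^ (n * (n + 1) / 2))⁻¹ + (q ^ ((n + 1) * (n + 2) / 2))⁻¹ := by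
  have hIcc : Icc (-((n + 1 : ℕ) : ℤ)) (n + 1 : ℕ) =
      insert (-((n : ℤ) + 1)) (insert ((n : ℤ) + 1) (Icc (-(n : ℤ)) n)) := by
    ext j; simp only [mem_Icc, mem_insert]; omega
  rw [thetaSum, hIcc, sum_insert (by simp only [mem_insert, mem_Icc]; omega),
    sum_insert (by simp only [mem_Icc]; omega),
    zpow_neg_triangle q (n := n) (by ring), zpow_neg_triangle q (n := n + 1) (by push_cast; ring),
    thetaSum]
  ring

noncomputable def weightedThetaSum (q : ℂ) (m : ℕ) : ℂ :=
  ∑ n ∈ range (m + 1), (-1 : ℂ) ^ n * q ^ (n * (n + 1)) * thetaSum q n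

lemma weightedThetaSum_recurrence (hq0 : q ≠ 0) (k : ℕ) :
    weightedThetaSum q (k + 2) =
      (1 - q ^ (2 * k + 4)) * weightedThetaSum q (k + 1) + q ^ (2 * k + 4) * weightedThetaSum q k +
        (-1) ^ k * q ^ ((k + 2) * (k + 3) / 2) * (1 + q ^ (k + 2)) := by
  have h2 : weightedThetaSum q (k + 2) = weightedThetaSum q (k + 1) +
      (-1) ^ (k + 2) * q ^ ((k + 2) * (k + 3)) * thetaSum q (k + 2) := sum_range_succ _ _
  have h1 : weightedThetaSum q (k + 1) = weightedThetaSum q k +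
      (-1) ^ (k + 1) * q ^ ((k + 1) * (k + 2)) * thetaSum q (k + 1) := sum_range_succ _ _
  have hθ := thetaSum_succ q (k + 1)
  set t := (k + 1) * (k + 2) / 2
  have e1 : (k + 1) * (k + 2) = 2 * t := (two_mul_triangle (k + 1)).symm
  have e2 : (k + 2) * (k + 3) / 2 = t + (k + 2) := triangle_succ (k + 1)
  have e3 : (k + 2) * (k + 3) = 2 * t + 2 * (k + 2) := by rw [← e1]; ring
  rw [e2] at hθ ⊢
  rw [e3] at h2
  rw [e1] at h1
  rw [h2, hθ, h1]
  field_simp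
  ring

noncomputable def signedQTermSum (q : ℂ) (m : ℕ) : ℂ :=
  (-1) ^ m * q ^ (m * (m + 1) / 2) * qTermSum q m

lemma signedQTermSum_recurrence (hq0 : q ≠ 0) (hq : ¬IsOfFinOrder q) (k : ℕ) :
    signedQTermSum q (k + 2) =
      (1 - q ^ (2 * k + 4)) * signedQTermSum q (k + 1) + q ^ (2 * k + 4) * signedQTermSum q k +
        (-1) ^ k * q ^ ((k + 2) * (k + 3) / 2) * (1 + q ^ (k + 2)) := by
  have e1 : (k + 1) * (k + 2) / 2 = k * (k + 1) / 2 + (k + 1) := triangle_succ k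
  have e2 : (k + 2) * (k + 3) / 2 = k * (k + 1) / 2 + (k + 1) + (k + 2) := by
    rw [triangle_succ (k + 1), e1]
  simp only [signedQTermSum, e1, e2]
  linear_combination (-1) ^ k * q ^ (k * (k + 1) / 2 + (k + 1)) * qTermSum_recurrence hq0 hq k

lemma signedQTermSum_zero (hq : ¬IsOfFinOrder q) : signedQTermSum q 0 = weightedThetaSum q 0 := by
  have h1q : (1 : ℂ) - q ≠ 0 := pow_one q ▸ one_sub_pow_ne_zero hq one_ne_zero
  simp [signedQTermSum, weightedThetaSum, qTermSum, qTerm_zero, thetaSum_zero, h1q]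

lemma signedQTermSum_one (hq0 : q ≠ 0) (hq : ¬IsOfFinOrder q) :
    signedQTermSum q 1 = weightedThetaSum q 1 := by
  have h1q : (1 : ℂ) - q ≠ 0 := pow_one q ▸ one_sub_pow_ne_zero hq one_ne_zero
  have h3q : (1 : ℂ) - q ^ 3 ≠ 0 := one_sub_pow_ne_zero hq three_ne_zero
  simp only [signedQTermSum, pow_one, Nat.reduceAdd, one_mul, Order.lt_two_iff, zero_le,
    Nat.div_self, neg_mul, qTermSum, qTerm, qp, prod_range_succ, sum_range_succ, range_one,
    sum_singleton, range_zero, prod_empty, pow_zero, mul_one, prod_singleton, weightedThetaSum,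
    zero_add, thetaSum_zero, thetaSum_succ, Nat.zero_div, inv_one]
  field_simp
  ring

end QSeries

open QSeries

/-- `(-1)^m q^{m(m+1)/2} Σ_{n=0}^m (q^{-m};q)_n (q^{m+1};q)_{n+1}/(q;q²)_{n+1}
      = Σ_{n=0}^m (-1)^n q^{n(n+1)} Σ_{j=-n}^n q^{-j(j+1)/2}`,
    as an identity of rational functions (stated for all `q` with `0 < |q| < 1`). -/
theorem stmt8 (m : ℕ) (q : ℂ) (hq : ‖q‖ < 1) (hq0 : q ≠ 0) :
    (-1 : ℂ) ^ m * q ^ (m * (m + 1) / 2) *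
        ∑ n ∈ Finset.range (m + 1),
          qp (q ^ (-(m : ℤ))) q n * qp (q ^ (m + 1)) q (n + 1) / qp q (q ^ 2) (n + 1) =
      ∑ n ∈ Finset.range (m + 1), (-1 : ℂ) ^ n * q ^ (n * (n + 1)) *
        ∑ j ∈ Finset.Icc (-(n : ℤ)) (n : ℤ), q ^ (-(j * (j + 1) / 2)) := by
  have hfin : ¬IsOfFinOrder q := fun h => hq.ne h.norm_eq_one
  have h := eq_of_second_order_recurrence
    (fun k x y => (1 - q ^ (2 * k + 4)) * y + q ^ (2 * k + 4) * x +
      (-1) ^ k * q ^ ((k + 2) * (k + 3) / 2) * (1 + q ^ (k + 2)))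
    (signedQTermSum_recurrence hq0 hfin) (weightedThetaSum_recurrence hq0)
    (signedQTermSum_zero hfin) (signedQTermSum_one hq0 hfin)
  rw [zpow_neg, zpow_natCast, pow_succ q m]
  exact congrFun h m
end
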